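/- arXiv:1801.10218 — 2 statements merged into one kernel-verified Lean document; each statement's English description precedes it below -/
import Mathlib

section
/- Let (Ω, 𝓕, (𝓕_t)_{t∈[0,∞)}) be a T-space with truncation (T_t), let τ be a stopping time, let (S, 𝒮) be a standard Borel space, and let Z : Ω → S be an (𝓕, 𝒮)-measurable map. Then Z is (𝓕_τ, 𝒮)-measurable if and only if Z ∘ T_τ = Z. -/
open MeasureTheory Set NNReal ENNReal

/-- A T-space (truncated space): a filtered measurable space `(Ω, 𝓕, (𝓕ₜ)_{t ∈ [0,∞)})`
with `𝓕 = ⋁ₜ 𝓕ₜ`, equipped with a truncation family `(Tₜ)` such that `(t, ω) ↦ Tₜ ω` is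
jointly measurable, `Tₜ ∘ Tₛ = T_{s ∧ t}` and `𝓕ₜ = σ(Tₜ)`. -/
structure TSpace (Ω : Type*) [mΩ : MeasurableSpace Ω] where
  filt : ℝ≥0 → MeasurableSpace Ω
  T : ℝ≥0 → Ω → Ω
  iSup_filt : (⨆ t : ℝ≥0, filt t) = mΩ
  meas_T : Measurable fun p : ℝ≥0 × Ω => T p.1 p.2
  T_comp : ∀ (s t : ℝ≥0) (ω : Ω), T t (T s ω) = T (min s t) ω
  filt_eq : ∀ t : ℝ≥0, filt t = MeasurableSpace.comap (T t) mΩ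

namespace TSpace

variable {Ω : Type*} [mΩ : MeasurableSpace Ω]

/-- Truncation indexed by extended times, with the convention `T_∞ = id`. -/
noncomputable def Te (X : TSpace Ω) (t : ℝ≥0∞) (ω : Ω) : Ω :=
  if t = ∞ then ω else X.T t.toNNReal ω

/-- A (raw) stopping time on a T-space: `{τ ≤ t} ∈ 𝓕ₜ` for all `t ∈ [0,∞)`. -/
def IsStoppingTime (X : TSpace Ω) (τ : Ω → ℝ≥0∞) : Prop :=
  ∀ t : ℝ≥0, MeasurableSet[X.filt t] {ω | τ ω ≤ t}

/-- Truncation at a stopping time: `T_τ(ω) = T_{τ(ω)}(ω)`. -/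
noncomputable def Tstop (X : TSpace Ω) (τ : Ω → ℝ≥0∞) (ω : Ω) : Ω :=
  X.Te (τ ω) ω

/-- A set in `𝓕ₜ` is invariant under `Tₜ`. -/
lemma preimage_self (X : TSpace Ω) {t : ℝ≥0} {A : Set Ω}
    (h : MeasurableSet[X.filt t] A) : X.T t ⁻¹' A = A := by
  rw [X.filt_eq, MeasurableSpace.measurableSet_comap] at h
  obtain ⟨B, -, rfl⟩ := h
  ext ω
  simp [Set.mem_preimage, X.T_comp]

/-- Each `Tₜ` is measurable. -/
lemma meas_T_t (X : TSpace Ω) (t : ℝ≥0) : Measurable (X.T t) :=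
  X.meas_T.comp measurable_prodMk_left

lemma filt_le (X : TSpace Ω) (t : ℝ≥0) : X.filt t ≤ mΩ := by
  rw [X.filt_eq]
  exact (X.meas_T_t t).comap_le

/-- Galmarino-type property of a stopping time. -/
lemma tau_T_le_iff (X : TSpace Ω) {τ : Ω → ℝ≥0∞} (hτ : X.IsStoppingTime τ)
    {t r : ℝ≥0} (hrt : r ≤ t) (ω : Ω) :
    τ (X.T t ω) ≤ r ↔ τ ω ≤ r := by
  have h := X.preimage_self (hτ r)
  have h1 : ∀ x : Ω, τ (X.T r x) ≤ r ↔ τ x ≤ r := by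
    intro x
    have := Set.ext_iff.mp h x
    simpa [Set.mem_preimage] using this
  have h2 : X.T r (X.T t ω) = X.T r ω := by
    rw [X.T_comp t r ω, min_eq_right hrt]
  constructor
  · intro hx
    have := (h1 (X.T t ω)).mpr hx
    rw [h2] at this
    exact (h1 ω).mp this
  · intro hx
    have := (h1 ω).mpr hx
    rw [← h2] at this
    exact (h1 (X.T t ω)).mp this

lemma tau_T_eq (X : TSpace Ω) {τ : Ω → ℝ≥0∞} (hτ : X.IsStoppingTime τ)
    {t : ℝ≥0} {ω : Ω} (h : τ ω ≤ (t : ℝ≥0∞)) : τ (X.T t ω) = τ ω := by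
  have hne : τ ω ≠ ∞ := ne_top_of_le_ne_top (by simp) h
  set s := (τ ω).toNNReal with hs
  have hsc : (s : ℝ≥0∞) = τ ω := ENNReal.coe_toNNReal hne
  have hst : s ≤ t := by
    rw [← ENNReal.coe_le_coe, hsc]; exact h
  have hTt : τ (X.T t ω) ≤ (t : ℝ≥0∞) := (X.tau_T_le_iff hτ le_rfl ω).mpr h
  have hneT : τ (X.T t ω) ≠ ∞ := ne_top_of_le_ne_top (by simp) hTt
  set u := (τ (X.T t ω)).toNNReal with hu
  have huc : (u : ℝ≥0∞) = τ (X.T t ω) := ENNReal.coe_toNNReal hneT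
  have hut : u ≤ t := by
    rw [← ENNReal.coe_le_coe, huc]; exact hTt
  apply le_antisymm
  · rw [← hsc]
    exact (X.tau_T_le_iff hτ hst ω).mpr (le_of_eq hsc.symm)
  · rw [← huc]
    exact (X.tau_T_le_iff hτ hut ω).mp (le_of_eq huc.symm)

end TSpace


/-- Let `τ` be a stopping time on a T-space, `(S, 𝒮)` a standard Borel space,
and `Z : Ω → S` an `(𝓕, 𝒮)`-measurable map. Then `Z` is `(𝓕_τ, 𝒮)`-measurable if and only if
`Z ∘ T_τ = Z`. -/
theorem stmt4 {Ω : Type*} [mΩ : MeasurableSpace Ω] [StandardBorelSpace Ω]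
    {S : Type*} [mS : MeasurableSpace S] [StandardBorelSpace S]
    (X : TSpace Ω) (τ : Ω → ℝ≥0∞) (hτ : X.IsStoppingTime τ)
    (Z : Ω → S) (hZ : Measurable Z) :
    (∀ B : Set S, MeasurableSet B →
        MeasurableSet (Z ⁻¹' B) ∧
          ∀ t : ℝ≥0, MeasurableSet[X.filt t] (Z ⁻¹' B ∩ {ω | τ ω ≤ (t : ℝ≥0∞)})) ↔
      Z ∘ X.Tstop τ = Z := by
  constructor
  · -- measurability w.r.t. 𝓕_τ implies Z ∘ T_τ = Z
    intro h
    funext ω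
    by_cases hω : τ ω = ∞
    · simp [Function.comp, TSpace.Tstop, TSpace.Te, hω]
    · set t := (τ ω).toNNReal with ht
      have htc : (t : ℝ≥0∞) = τ ω := ENNReal.coe_toNNReal hω
      obtain ⟨-, h2⟩ := h {Z ω} (measurableSet_singleton _)
      have hinv := X.preimage_self (h2 t)
      have hmem : ω ∈ Z ⁻¹' {Z ω} ∩ {ω' | τ ω' ≤ (t : ℝ≥0∞)} :=
        ⟨rfl, le_of_eq htc.symm⟩
      rw [← hinv] at hmem
      have : Z (X.T t ω) = Z ω := hmem.1
      simpa [Function.comp, TSpace.Tstop, TSpace.Te, hω, ← ht] using this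
  · -- Z ∘ T_τ = Z implies measurability w.r.t. 𝓕_τ
    intro h B hB
    have hZB : MeasurableSet (Z ⁻¹' B) := hZ hB
    refine ⟨hZB, fun t => ?_⟩
    have hZT : ∀ x : Ω, Z (X.Tstop τ x) = Z x := fun x => congrFun h x
    have hkey : ∀ ω : Ω, τ ω ≤ (t : ℝ≥0∞) → Z (X.T t ω) = Z ω := by
      intro ω hωt
      have hne : τ ω ≠ ∞ := ne_top_of_le_ne_top (by simp) hωt
      set s := (τ ω).toNNReal with hs
      have hsc : (s : ℝ≥0∞) = τ ω := ENNReal.coe_toNNReal hne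
      have hst : s ≤ t := by rw [← ENNReal.coe_le_coe, hsc]; exact hωt
      have hτT : τ (X.T t ω) = τ ω := X.tau_T_eq hτ hωt
      have e1 : Z (X.T t ω) = Z (X.Tstop τ (X.T t ω)) := (hZT _).symm
      have e2 : X.Tstop τ (X.T t ω) = X.T s (X.T t ω) := by
        simp [TSpace.Tstop, TSpace.Te, hτT, hne, ← hs]
      have e3 : X.T s (X.T t ω) = X.T s ω := by
        rw [X.T_comp t s ω, min_eq_right hst]
      have e4 : Z (X.T s ω) = Z ω := by
        have := hZT ω
        rwa [TSpace.Tstop, TSpace.Te, if_neg hne, ← hs] at this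
      rw [e1, e2, e3, e4]
    rw [X.filt_eq, MeasurableSpace.measurableSet_comap]
    refine ⟨Z ⁻¹' B ∩ {ω | τ ω ≤ (t : ℝ≥0∞)}, hZB.inter (X.filt_le t _ (hτ t)), ?_⟩
    ext ω
    simp only [Set.mem_preimage, Set.mem_inter_iff, Set.mem_setOf_eq]
    constructor
    · rintro ⟨h1, h2⟩
      have hτω : τ ω ≤ (t : ℝ≥0∞) := (X.tau_T_le_iff hτ le_rfl ω).mp h2
      exact ⟨by rwa [hkey ω hτω] at h1, hτω⟩
    · rintro ⟨h1, h2⟩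
      exact ⟨by rwa [hkey ω h2], (X.tau_T_le_iff hτ le_rfl ω).mpr h2⟩
end

section
/- Let Ω be a TC-space equipped with a shift operator θ, and let κ and σ be stopping times. Then the map τ : Ω → [0,∞] defined by τ(ω) = κ(ω) + σ(θ_κ(ω)) is a stopping time. -/
open MeasureTheory Set NNReal ENNReal

open MeasureTheory Set NNReal ENNReal

/-- The positive part of an extended-real number, as an element of `ℝ≥0∞`. -/
noncomputable def EReal.posPart (x : EReal) : ℝ≥0∞ :=
  if x = ⊤ then ⊤ else ENNReal.ofReal x.toReal

/-- The (possibly `-∞`-valued) integral `∫ G dμ = ∫ G⁺ dμ − ∫ G⁻ dμ` of an extended-real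
function, meaningful whenever `∫ G⁺ dμ < ∞`. -/
noncomputable def eIntegral {Ω : Type*} [MeasurableSpace Ω] (μ : Measure Ω)
    (G : Ω → EReal) : EReal :=
  ((∫⁻ ω, (G ω).posPart ∂μ : ℝ≥0∞) : EReal) - ((∫⁻ ω, (-(G ω)).posPart ∂μ : ℝ≥0∞) : EReal)

/-- A map is universally measurable if it is `μ`-null measurable (i.e. measurable for the
`μ`-completed σ-algebra) for every Borel probability measure `μ`. -/
def UnivMeasurable {α β : Type*} [MeasurableSpace α] [MeasurableSpace β] (f : α → β) : Prop :=
  ∀ μ : Measure α, IsProbabilityMeasure μ → NullMeasurable f μ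

/-- A (universally measurable) kernel from `α` to `Ω`: a family of Borel probability measures
`ν x` such that `x ↦ ν x B` is universally measurable for every Borel set `B`. -/
def IsUKernel {α Ω : Type*} [MeasurableSpace α] [MeasurableSpace Ω]
    (ν : α → ProbabilityMeasure Ω) : Prop :=
  ∀ B : Set Ω, MeasurableSet B → UnivMeasurable fun x => (ν x : Measure Ω) B

/-- A TC-space (truncation–concatenation space): a T-space together with a measurable
compatibility set `𝒞 ⊆ Ω × [0,∞) × Ω` and a concatenation operator `∗ : 𝒞 → Ω`
(extended arbitrarily off `𝒞`, measurable on `𝒞`) satisfying the compatibility and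
truncation axioms of Definition of TC-spaces. -/
structure TCSpace (Ω : Type*) [mΩ : MeasurableSpace Ω] extends TSpace Ω where
  Comp : Set (Ω × ℝ≥0 × Ω)
  meas_Comp : MeasurableSet Comp
  conc : Ω → ℝ≥0 → Ω → Ω
  meas_conc : Measurable fun p : Comp => conc (p : Ω × ℝ≥0 × Ω).1 (p : Ω × ℝ≥0 × Ω).2.1
      (p : Ω × ℝ≥0 × Ω).2.2
  comp_left : ∀ (ω : Ω) (t : ℝ≥0) (ω' : Ω), ((ω, t, ω') ∈ Comp ↔ (T t ω, t, ω') ∈ Comp)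
  comp_right : ∀ (ω : Ω) (t : ℝ≥0) (ω' : Ω) (s : ℝ≥0),
      ((ω, t, ω') ∈ Comp ↔ (ω, t, T s ω') ∈ Comp)
  conc_left : ∀ (ω : Ω) (t : ℝ≥0) (ω' : Ω), (ω, t, ω') ∈ Comp →
      conc ω t ω' = conc (T t ω) t ω'
  trunc_conc_le : ∀ (ω : Ω) (t : ℝ≥0) (ω' : Ω) (s : ℝ≥0), (ω, t, ω') ∈ Comp → s ≤ t →
      T s (conc ω t ω') = T s ω
  trunc_conc_gt : ∀ (ω : Ω) (t : ℝ≥0) (ω' : Ω) (s : ℝ≥0), (ω, t, ω') ∈ Comp → t < s →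
      T s (conc ω t ω') = conc ω t (T (s - t) ω')

namespace TCSpace

variable {Ω : Type*} [mΩ : MeasurableSpace Ω]

/-- Concatenation at an extended time, with the convention `ω ∗_∞ ω' = ω`. -/
noncomputable def concE (X : TCSpace Ω) (ω : Ω) (t : ℝ≥0∞) (ω' : Ω) : Ω :=
  if t = ∞ then ω else X.conc ω t.toNNReal ω'

/-- Extended compatibility: any two elements are compatible at `t = ∞`. -/
def CompE (X : TCSpace Ω) (ω : Ω) (t : ℝ≥0∞) (ω' : Ω) : Prop :=
  t = ∞ ∨ (ω, t.toNNReal, ω') ∈ X.Comp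

/-- A probability measure `μ` and a kernel `ν` are compatible at a stopping time `τ`:
`ν^{≤τ}_ω(𝒞_{ω,τ(ω)}) = 1` for `μ`-almost every `ω`. -/
def MeasCompatible (X : TCSpace Ω) (μ : Measure Ω) (ν : Ω → ProbabilityMeasure Ω)
    (τ : Ω → ℝ≥0∞) : Prop :=
  ∀ᵐ ω ∂μ, (ν (X.toTSpace.Tstop τ ω) : Measure Ω) {ω' | X.CompE ω (τ ω) ω'} = 1

/-- The concatenation `μ ∗_τ ν` of a measure and a kernel at a stopping time `τ`: the
pushforward of `μ(dω) ν^{≤τ}_ω(dω')` under `(ω, ω') ↦ ω ∗_{τ(ω)} ω'`. -/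
noncomputable def concMeasure (X : TCSpace Ω) (μ : Measure Ω)
    (ν : Ω → ProbabilityMeasure Ω) (τ : Ω → ℝ≥0∞) : Measure Ω :=
  μ.bind fun ω => Measure.map (fun ω' => X.concE ω (τ ω) ω') (ν (X.toTSpace.Tstop τ ω))

/-- A tail map: `G(ω ∗_t ω') = G(ω')` for all finite `t` and compatible pairs. -/
def IsTail (X : TCSpace Ω) (G : Ω → EReal) : Prop :=
  ∀ (t : ℝ≥0) (ω ω' : Ω), (ω, t, ω') ∈ X.Comp → G (X.conc ω t ω') = G ω'

end TCSpace

/-- A universally measurable selector of a control correspondence `P`. -/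
def IsSelector {Ω : Type*} [MeasurableSpace Ω] (P : Ω → Set (ProbabilityMeasure Ω))
    (ν : Ω → ProbabilityMeasure Ω) : Prop :=
  IsUKernel ν ∧ ∀ ω, ν ω ∈ P ω

/-- A control correspondence on a TC-space is concatenable if for every `ω`, `μ ∈ P ω`,
`P`-selector `ν` and stopping time `τ`, `ν` is compatible with `μ` at `τ` and
`μ ∗_τ ν ∈ P ω`. -/
def TCSpace.Concatenable {Ω : Type*} [MeasurableSpace Ω] (X : TCSpace Ω)
    (P : Ω → Set (ProbabilityMeasure Ω)) : Prop :=
  ∀ (ω : Ω) (μ : ProbabilityMeasure Ω), μ ∈ P ω →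
    ∀ ν : Ω → ProbabilityMeasure Ω, IsSelector P ν →
      ∀ τ : Ω → ℝ≥0∞, X.toTSpace.IsStoppingTime τ →
        X.MeasCompatible (μ : Measure Ω) ν τ ∧
          ∃ μ' ∈ P ω, (μ' : Measure Ω) = X.concMeasure (μ : Measure Ω) ν τ

/-- A control correspondence on a TC-space is disintegrable if for every `ω`, `μ ∈ P ω` and
stopping time `τ` there is a `P`-selector `ν`, compatible with `μ` at `τ`, with
`μ = μ ∗_τ ν`. -/
def TCSpace.Disintegrable {Ω : Type*} [MeasurableSpace Ω] (X : TCSpace Ω)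
    (P : Ω → Set (ProbabilityMeasure Ω)) : Prop :=
  ∀ (ω : Ω) (μ : ProbabilityMeasure Ω), μ ∈ P ω →
    ∀ τ : Ω → ℝ≥0∞, X.toTSpace.IsStoppingTime τ →
      ∃ ν : Ω → ProbabilityMeasure Ω, IsSelector P ν ∧
        X.MeasCompatible (μ : Measure Ω) ν τ ∧
          (μ : Measure Ω) = X.concMeasure (μ : Measure Ω) ν τ

/-- A real path indexed by `[0,∞)` is càdlàg: right-continuous with left limits. -/
def IsCadlag (f : ℝ≥0 → ℝ) : Prop :=
  (∀ t : ℝ≥0, ContinuousWithinAt f (Set.Ici t) t) ∧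
  (∀ t : ℝ≥0, 0 < t → ∃ L : ℝ, Filter.Tendsto f (nhdsWithin t (Set.Iio t)) (nhds L))

/-- A càdlàg adapted real process for a filtration `F`. -/
def CadlagAdapted {Ω : Type*} [MeasurableSpace Ω] (F : ℝ≥0 → MeasurableSpace Ω)
    (Y : ℝ≥0 → Ω → ℝ) : Prop :=
  (∀ ω, IsCadlag fun t => Y t ω) ∧ (∀ t : ℝ≥0, Measurable[F t] (Y t))

/-- The space–time exit time `τₙ(ω) = inf{t ≥ 0 : |Yₜ(ω)| ≥ n} ∧ n`. -/
noncomputable def stopTau {Ω : Type*} (Y : ℝ≥0 → Ω → ℝ) (n : ℕ) (ω : Ω) : ℝ≥0 :=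
  sInf ({t : ℝ≥0 | (n : ℝ) ≤ |Y t ω|} ∪ {(n : ℝ≥0)})

/-- The stopped process `Yⁿ = Y^{τₙ}`. -/
noncomputable def stopped {Ω : Type*} (Y : ℝ≥0 → Ω → ℝ) (n : ℕ) : ℝ≥0 → Ω → ℝ :=
  fun t ω => Y (min (stopTau Y n ω) t) ω

/-- The martingale property (via set integrals) of a process for a filtration `F` and a
measure `μ`: integrability, together with `∫_A Y_t dμ = ∫_A Y_s dμ` for `s ≤ t` and
`A ∈ F s`. -/
def IsMartingaleOn {Ω : Type*} [MeasurableSpace Ω] (F : ℝ≥0 → MeasurableSpace Ω)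
    (μ : MeasureTheory.Measure Ω) (Y : ℝ≥0 → Ω → ℝ) : Prop :=
  (∀ t : ℝ≥0, MeasureTheory.Integrable (Y t) μ) ∧
  ∀ s t : ℝ≥0, s ≤ t → ∀ A : Set Ω, MeasurableSet[F s] A →
    ∫ ω in A, Y t ω ∂μ = ∫ ω in A, Y s ω ∂μ

/-- The adjusted concatenation on real paths:
`(x ⋆_t x')(s) = x(s)` for `s ≤ t` and `x(t) + x'(s−t) − x'(0)` for `s > t`. -/
noncomputable def adjConc (x : ℝ≥0 → ℝ) (t : ℝ≥0) (x' : ℝ≥0 → ℝ) : ℝ≥0 → ℝ :=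
  fun s => if s ≤ t then x s else x t + x' (s - t) - x' 0

/-- A TC-morphism from a TC-space into `(D_ℝ, ⋆)`: a map `Φ` into càdlàg real paths,
non-anticipating (each `Φ_t` is `𝓕ₜ`-measurable) and respecting concatenation:
`Φ(ω ∗_t ω') = Φ(ω) ⋆_t Φ(ω')` on the compatibility set. -/
def IsTCMorphismD {Ω : Type*} [mΩ : MeasurableSpace Ω] (X : TCSpace Ω)
    (Φ : Ω → ℝ≥0 → ℝ) : Prop :=
  (∀ ω, IsCadlag (Φ ω)) ∧
  (∀ t : ℝ≥0, Measurable[X.filt t] fun ω => Φ ω t) ∧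
  (∀ (t : ℝ≥0) (ω ω' : Ω), (ω, t, ω') ∈ X.Comp →
    Φ (X.conc ω t ω') = adjConc (Φ ω) t (Φ ω'))

/-- A TC-morphism into `(D_ℝ⁰, ⋆)`: a TC-morphism into `(D_ℝ, ⋆)` whose paths start at `0`. -/
def IsTCMorphismD0 {Ω : Type*} [mΩ : MeasurableSpace Ω] (X : TCSpace Ω)
    (Φ : Ω → ℝ≥0 → ℝ) : Prop :=
  IsTCMorphismD X Φ ∧ ∀ ω, Φ ω 0 = 0

/-- `Φ` is canonically locally bounded: there are constants `Mₙ` with `|Φⁿ_t(ω)| ≤ Mₙ`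
for all `ω`, `t`, where `Φⁿ` is `Φ` stopped at the space–time exit time `τₙ`. -/
def CanLocBounded {Ω : Type*} (Φ : Ω → ℝ≥0 → ℝ) : Prop :=
  ∃ M : ℕ → ℝ, ∀ (n : ℕ) (ω : Ω) (t : ℝ≥0),
    |stopped (fun t ω => Φ ω t) n t ω| ≤ M n

/-- A shift operator on a TC-space: a measurable partial inverse of concatenation with
`ω ∗_t θ_t(ω) = ω` and `(θ_t(ω))_{≤t+s} = (θ_t(ω_{≤s}))_{≤t+s}`. -/
def IsShift {Ω : Type*} [mΩ : MeasurableSpace Ω] (X : TCSpace Ω)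
    (θ : ℝ≥0 → Ω → Ω) : Prop :=
  Measurable (fun p : ℝ≥0 × Ω => θ p.1 p.2) ∧
  (∀ (t : ℝ≥0) (ω : Ω), (ω, t, θ t ω) ∈ X.Comp ∧ X.conc ω t (θ t ω) = ω) ∧
  (∀ (t s : ℝ≥0) (ω : Ω), X.T (t + s) (θ t ω) = X.T (t + s) (θ t (X.T s ω)))

/-- The shift at a stopping time, `θ_κ(ω) = θ_{κ(ω)}(ω)` with `θ_∞ = id`. -/
noncomputable def shiftStop {Ω : Type*}
    (θ : ℝ≥0 → Ω → Ω) (κ : Ω → ℝ≥0∞) (ω : Ω) : Ω :=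
  if κ ω = ∞ then ω else θ (κ ω).toNNReal ω

/-- The `(𝒟, X)`-generated control correspondence `𝒫̄(x)`: all Borel probability measures
under which every `Φⁿ`, `Φ ∈ 𝒟`, is a martingale and `X₀ = x` a.s. -/
def genCorr {Ω E : Type*} [mΩ : MeasurableSpace Ω] [MeasurableSpace E] (X : TCSpace Ω)
    {ι : Type*} (D : ι → Ω → ℝ≥0 → ℝ) (Xm : Ω → E) (x : E) :
    Set (MeasureTheory.ProbabilityMeasure Ω) :=
  {μ | (∀ i, ∀ n : ℕ, IsMartingaleOn X.filt (μ : MeasureTheory.Measure Ω)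
          (stopped (fun t ω => D i ω t) n)) ∧
       (μ : MeasureTheory.Measure Ω) {ω | Xm (X.T 0 ω) = x} = 1}

/-!
Since `T_t` is idempotent, `𝓕_t = σ(T_t)` consists exactly of the measurable sets invariant
under `ω ↦ ω_{≤t}`; so it suffices to show that `τ(ω) ≤ t ↔ τ(ω_{≤t}) ≤ t`. If `κ(ω) = r ≤ t`,
then also `κ(ω_{≤t}) = r`, and `θ_r(ω)`, `θ_r(ω_{≤t})` agree up to time `t - r` by the shift axiom,
so `σ` compares them with `t - r` in the same way. If `κ(ω) > t`, then `κ(ω_{≤t}) > t` as well.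
-/

namespace TSpace

variable {Ω : Type*} [MeasurableSpace Ω] (X : TSpace Ω)

lemma measurable_T (t : ℝ≥0) : Measurable (X.T t) :=
  X.meas_T.comp (measurable_const.prodMk measurable_id)

lemma T_T_of_le {s t : ℝ≥0} (h : s ≤ t) (ω : Ω) : X.T s (X.T t ω) = X.T s ω := by
  rw [X.T_comp, min_eq_right h]

lemma measurableSet_filt_iff (t : ℝ≥0) {A : Set Ω} :
    MeasurableSet[X.filt t] A ↔ MeasurableSet A ∧ ∀ ω, X.T t ω ∈ A ↔ ω ∈ A := by
  rw [X.filt_eq, MeasurableSpace.measurableSet_comap]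
  constructor
  · rintro ⟨B, hB, rfl⟩
    exact ⟨X.measurable_T t hB, fun ω => by rw [mem_preimage, mem_preimage, X.T_T_of_le le_rfl]⟩
  · rintro ⟨hA, hinv⟩
    exact ⟨A, hA, Set.ext hinv⟩

namespace IsStoppingTime

variable {X} {ρ : Ω → ℝ≥0∞} (hρ : X.IsStoppingTime ρ)
include hρ

lemma measurable : Measurable ρ := by
  refine measurable_of_Iic fun x => ?_
  rcases eq_or_ne x ∞ with rfl | hx
  · simp
  · have h := ((X.measurableSet_filt_iff x.toNNReal).1 (hρ x.toNNReal)).1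
    rwa [coe_toNNReal hx] at h

lemma le_iff_of_T_eq {s : ℝ≥0} {ω₁ ω₂ : Ω} (h : X.T s ω₁ = X.T s ω₂) :
    ρ ω₁ ≤ s ↔ ρ ω₂ ≤ s := by
  have hinv := ((X.measurableSet_filt_iff s).1 (hρ s)).2
  calc ρ ω₁ ≤ s ↔ X.T s ω₁ ∈ {ω | ρ ω ≤ s} := (hinv ω₁).symm
    _ ↔ X.T s ω₂ ∈ {ω | ρ ω ≤ s} := by rw [h]
    _ ↔ ρ ω₂ ≤ s := hinv ω₂

lemma apply_T_le_iff {s t : ℝ≥0} (hst : s ≤ t) (ω : Ω) :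
    ρ (X.T t ω) ≤ s ↔ ρ ω ≤ s :=
  hρ.le_iff_of_T_eq (X.T_T_of_le hst ω)

lemma apply_T_of_le {t : ℝ≥0} {ω : Ω} (h : ρ ω ≤ t) : ρ (X.T t ω) = ρ ω := by
  have hT : ρ (X.T t ω) ≤ t := (hρ.apply_T_le_iff le_rfl ω).2 h
  lift ρ ω to ℝ≥0 using ne_top_of_le_ne_top coe_ne_top h with r hr
  lift ρ (X.T t ω) to ℝ≥0 using ne_top_of_le_ne_top coe_ne_top hT with r' hr'
  apply le_antisymm
  · rw [hr', hρ.apply_T_le_iff (coe_le_coe.1 h) ω, ← hr]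
  · rw [hr, ← hρ.apply_T_le_iff (coe_le_coe.1 hT) ω, ← hr']

end IsStoppingTime

end TSpace

lemma shiftStop_of_eq {Ω : Type*} {θ : ℝ≥0 → Ω → Ω} {κ : Ω → ℝ≥0∞} {ω : Ω} {r : ℝ≥0}
    (h : κ ω = r) : shiftStop θ κ ω = θ r ω := by
  simp [shiftStop, h]

section Shift

variable {Ω : Type*} [MeasurableSpace Ω] {X : TCSpace Ω} {θ : ℝ≥0 → Ω → Ω}

lemma IsShift.measurable_shiftStop (hθ : IsShift X θ) {κ : Ω → ℝ≥0∞} (hκ : Measurable κ) :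
    Measurable (shiftStop θ κ) :=
  Measurable.ite (hκ (measurableSet_singleton ∞)) measurable_id
    (hθ.1.comp ((measurable_toNNReal.comp hκ).prodMk measurable_id))

lemma IsShift.T_sub_apply_T (hθ : IsShift X θ) (r t : ℝ≥0) (ω : Ω) :
    X.T (t - r) (θ r (X.T t ω)) = X.T (t - r) (θ r ω) := by
  have hle : t - r ≤ r + t := tsub_le_self.trans le_add_self
  rw [← X.T_T_of_le hle, ← hθ.2.2 r t ω, X.T_T_of_le hle]

end Shift

theorem stmt15_general {Ω : Type*} [mΩ : MeasurableSpace Ω]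
    (X : TCSpace Ω) (θ : ℝ≥0 → Ω → Ω) (hθ : IsShift X θ)
    (κ σ : Ω → ℝ≥0∞)
    (hκ : X.toTSpace.IsStoppingTime κ) (hσ : X.toTSpace.IsStoppingTime σ) :
    X.toTSpace.IsStoppingTime (fun ω => κ ω + σ (shiftStop θ κ ω)) := by
  have hτ : Measurable fun ω => κ ω + σ (shiftStop θ κ ω) :=
    hκ.measurable.add (hσ.measurable.comp (hθ.measurable_shiftStop hκ.measurable))
  intro t
  refine (X.measurableSet_filt_iff t).2 ⟨hτ measurableSet_Iic, fun ω => ?_⟩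
  simp only [mem_ofPred_eq]
  by_cases hκt : κ ω ≤ t
  · have hκT := hκ.apply_T_of_le hκt
    lift κ ω to ℝ≥0 using ne_top_of_le_ne_top coe_ne_top hκt with r hr
    rw [shiftStop_of_eq hκT, shiftStop_of_eq hr.symm, hκT,
      ← le_sub_iff_add_le_left coe_ne_top hκt, ← le_sub_iff_add_le_left coe_ne_top hκt,
      ← coe_sub, hσ.le_iff_of_T_eq (hθ.T_sub_apply_T r t ω)]
  · have hκTt : ¬ κ (X.T t ω) ≤ t := (hκ.apply_T_le_iff le_rfl ω).not.2 hκt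
    exact iff_of_false (fun h => hκTt (le_self_add.trans h)) (fun h => hκt (le_self_add.trans h))

/-- On a TC-space equipped with a shift operator `θ`, for stopping times
`κ` and `σ`, the map `τ(ω) = κ(ω) + σ(θ_κ(ω))` is again a stopping time. -/
theorem stmt15 {Ω : Type*} [mΩ : MeasurableSpace Ω] [StandardBorelSpace Ω]
    (X : TCSpace Ω) (θ : ℝ≥0 → Ω → Ω) (hθ : IsShift X θ)
    (κ σ : Ω → ℝ≥0∞)
    (hκ : X.toTSpace.IsStoppingTime κ) (hσ : X.toTSpace.IsStoppingTime σ) :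
    X.toTSpace.IsStoppingTime (fun ω => κ ω + σ (shiftStop θ κ ω)) :=
  stmt15_general (mΩ := mΩ) X θ hθ κ σ hκ hσ
end
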